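/- arXiv:1308.2116 — 3 statements merged into one kernel-verified Lean document; each statement's English description precedes it below -/
import Mathlib

section
/- Let m be a positive integer, K a symmetric positive semidefinite real m×m matrix, Y ∈ ℝᵐ, and λ > 0 a real number. Then the matrix K + λI is invertible, and the vector A* = (K + λI)⁻¹ Y is a global minimizer of the regularized least-squares objective J, i.e. J(A*) ≤ J(A) for every A ∈ ℝᵐ. -/
/-!
`K + λ I` is positive definite, hence invertible. At `A* = (K + λ I)⁻¹ Y` the residual is
`Y - K A* = λ A*`, so all cross terms cancel in the expansion
`J(A* + D) = J(A*) + ‖K D‖² + λ Dᵀ K D`, and both added terms are nonnegative because `K` is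
positive semidefinite.
-/

open Matrix

section RidgeRegression

variable {n : Type*} [Fintype n]

def ridgeObjective {R : Type*} [CommRing R] (K : Matrix n n R) (Y : n → R) (l : R)
    (A : n → R) : R :=
  (Y - K *ᵥ A) ⬝ᵥ (Y - K *ᵥ A) + l * (A ⬝ᵥ K *ᵥ A)

lemma isUnit_add_smul_one_of_posSemidef [DecidableEq n] {K : Matrix n n ℝ} (hK : K.PosSemidef)
    {l : ℝ} (hl : 0 < l) : IsUnit (K + l • (1 : Matrix n n ℝ)) :=
  (PosDef.posSemidef_add hK (PosDef.one.smul hl)).isUnit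

lemma ridgeObjective_add_of_normal_eq {R : Type*} [CommRing R] [DecidableEq n]
    {K : Matrix n n R} (hK : K.IsSymm) {Y : n → R} {l : R} {A : n → R}
    (hA : (K + l • (1 : Matrix n n R)) *ᵥ A = Y) (D : n → R) :
    ridgeObjective K Y l (A + D) =
      ridgeObjective K Y l A + (K *ᵥ D) ⬝ᵥ (K *ᵥ D) + l * (D ⬝ᵥ K *ᵥ D) := by
  have hres : Y - K *ᵥ A = l • A := by
    rw [← hA, add_mulVec, smul_mulVec, one_mulVec, add_sub_cancel_left]
  have hsymm : D ⬝ᵥ K *ᵥ A = A ⬝ᵥ K *ᵥ D := by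
    rw [dotProduct_mulVec, ← mulVec_transpose, hK.eq, dotProduct_comm]
  have hres' : Y - K *ᵥ (A + D) = l • A - K *ᵥ D := by
    rw [mulVec_add, ← sub_sub, hres]
  rw [ridgeObjective, ridgeObjective, hres', hres]
  simp only [mulVec_add, add_dotProduct, dotProduct_add,
    sub_dotProduct, dotProduct_sub, smul_dotProduct, dotProduct_smul, hsymm, smul_eq_mul,
    dotProduct_comm (K *ᵥ D) A]
  ring

lemma ridgeObjective_le_of_normal_eq [DecidableEq n] {K : Matrix n n ℝ} (hK : K.PosSemidef)
    {Y : n → ℝ} {l : ℝ} (hl : 0 ≤ l) {A : n → ℝ} (hA : (K + l • (1 : Matrix n n ℝ)) *ᵥ A = Y)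
    (B : n → ℝ) : ridgeObjective K Y l A ≤ ridgeObjective K Y l B := by
  have hB : B = A + (B - A) := (add_sub_cancel A B).symm
  have hquad : 0 ≤ (B - A) ⬝ᵥ K *ᵥ (B - A) := by
    simpa using hK.dotProduct_mulVec_nonneg (B - A)
  have hsq : 0 ≤ (K *ᵥ (B - A)) ⬝ᵥ (K *ᵥ (B - A)) := by
    simpa using dotProduct_self_star_nonneg (K *ᵥ (B - A))
  rw [hB, ridgeObjective_add_of_normal_eq (isHermitian_iff_isSymm.mp hK.isHermitian) hA]
  linarith [mul_nonneg hl hquad]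

end RidgeRegression

theorem weight_matrix_global_minimizer_general
    (m : ℕ)
    (K : Matrix (Fin m) (Fin m) ℝ) (hK : K.PosSemidef)
    (Y : Fin m → ℝ) (l : ℝ) (hl : 0 < l)
    (J : (Fin m → ℝ) → ℝ)
    (hJ : ∀ A : Fin m → ℝ,
      J A = (Y - K.mulVec A) ⬝ᵥ (Y - K.mulVec A) + l * (A ⬝ᵥ K.mulVec A)) :
    IsUnit (K + l • (1 : Matrix (Fin m) (Fin m) ℝ)) ∧
    ∀ A : Fin m → ℝ,
      J ((K + l • (1 : Matrix (Fin m) (Fin m) ℝ))⁻¹.mulVec Y) ≤ J A := by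
  have hunit := isUnit_add_smul_one_of_posSemidef hK hl
  have hnormal : (K + l • (1 : Matrix (Fin m) (Fin m) ℝ)) *ᵥ
      ((K + l • (1 : Matrix (Fin m) (Fin m) ℝ))⁻¹ *ᵥ Y) = Y := by
    rw [mulVec_mulVec, mul_nonsing_inv _ ((isUnit_iff_isUnit_det _).mp hunit), one_mulVec]
  refine ⟨hunit, fun A => ?_⟩
  rw [hJ, hJ]
  exact ridgeObjective_le_of_normal_eq hK hl.le hnormal A

/-- For a symmetric positive semidefinite real `m × m` matrix `K`,
`Y ∈ ℝᵐ` and `λ > 0`, the matrix `K + λ I` is invertible and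
`A* = (K + λ I)⁻¹ Y` is a global minimizer of the regularized least-squares objective
`J(A) = (Y − K A)ᵀ(Y − K A) + λ Aᵀ(K A)`. -/
theorem weight_matrix_global_minimizer
    (m : ℕ) (hm : 0 < m)
    (K : Matrix (Fin m) (Fin m) ℝ) (hK : K.PosSemidef)
    (Y : Fin m → ℝ) (l : ℝ) (hl : 0 < l)
    (J : (Fin m → ℝ) → ℝ)
    (hJ : ∀ A : Fin m → ℝ,
      J A = (Y - K.mulVec A) ⬝ᵥ (Y - K.mulVec A) + l * (A ⬝ᵥ K.mulVec A)) :
    IsUnit (K + l • (1 : Matrix (Fin m) (Fin m) ℝ)) ∧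
    ∀ A : Fin m → ℝ,
      J ((K + l • (1 : Matrix (Fin m) (Fin m) ℝ))⁻¹.mulVec Y) ≤ J A :=
  weight_matrix_global_minimizer_general m K hK Y l hl J hJ
end

section
/- Let m be a positive integer, K a symmetric real m×m matrix, Y ∈ ℝᵐ, and λ > 0 a real number such that K + λI is invertible. Setting A* = (K + λI)⁻¹ Y, the regularized least-squares objective satisfies the exact decomposition J(A) = (A − A*)ᵀ K(K + λI)(A − A*) + J(A*) for every A ∈ ℝᵐ. -/
/-! With `M = K + λI` and `Q = K M`, symmetry of `K` makes the objective a quadratic form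
`J(A) = YᵀY - 2 A*ᵀ Q A + Aᵀ Q A`, because `Y = M A*` and `M` commutes with `K`.
Completing the square around `A*` in the symmetric form `Q` gives the decomposition. -/

open Matrix

namespace Matrix

variable {n R : Type*} [CommRing R]

theorem IsSymm.add_smul_one [DecidableEq n] {K : Matrix n n R} (hK : K.IsSymm) (l : R) :
    (K + l • (1 : Matrix n n R)).IsSymm :=
  hK.add (isSymm_one.smul l)

variable [Fintype n]

theorem IsSymm.dotProduct_mulVec_comm {Q : Matrix n n R} (hQ : Q.IsSymm) (x y : n → R) :
    x ⬝ᵥ Q *ᵥ y = y ⬝ᵥ Q *ᵥ x := by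
  rw [dotProduct_mulVec, ← mulVec_transpose, hQ.eq, dotProduct_comm]

theorem IsSymm.sub_dotProduct_mulVec_sub {Q : Matrix n n R} (hQ : Q.IsSymm) (x a : n → R) :
    (x - a) ⬝ᵥ Q *ᵥ (x - a) = x ⬝ᵥ Q *ᵥ x - 2 * (a ⬝ᵥ Q *ᵥ x) + a ⬝ᵥ Q *ᵥ a := by
  simp only [mulVec_sub, dotProduct_sub, sub_dotProduct, hQ.dotProduct_mulVec_comm x a]
  ring

variable [DecidableEq n] {K : Matrix n n R}

theorem commute_add_smul_one (K : Matrix n n R) (l : R) : Commute K (K + l • 1) :=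
  (Commute.refl K).add_right ((Commute.one_right K).smul_right l)

theorem IsSymm.mul_add_smul_one (hK : K.IsSymm) (l : R) : (K * (K + l • 1)).IsSymm := by
  rw [IsSymm, transpose_mul, (hK.add_smul_one l).eq, hK.eq]
  exact (commute_add_smul_one K l).eq.symm

theorem IsSymm.sub_mulVec_dotProduct_self_add (hK : K.IsSymm) (l : R) (Y A : n → R) :
    (Y - K *ᵥ A) ⬝ᵥ (Y - K *ᵥ A) + l * (A ⬝ᵥ K *ᵥ A) =
      Y ⬝ᵥ Y - 2 * (Y ⬝ᵥ K *ᵥ A) + A ⬝ᵥ (K * (K + l • 1)) *ᵥ A := by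
  have hKK : K *ᵥ A ⬝ᵥ K *ᵥ A = A ⬝ᵥ (K * K) *ᵥ A := by
    rw [dotProduct_comm, ← mulVec_mulVec, hK.dotProduct_mulVec_comm]
  simp only [sub_dotProduct, dotProduct_sub, hKK, dotProduct_comm (K *ᵥ A) Y, mul_add, mul_one,
    add_mulVec, smul_mulVec, dotProduct_add, dotProduct_smul, smul_eq_mul, mul_smul_comm]
  ring

theorem IsSymm.add_smul_one_mulVec_dotProduct_mulVec (hK : K.IsSymm) (l : R) (a A : n → R) :
    (K + l • 1) *ᵥ a ⬝ᵥ K *ᵥ A = a ⬝ᵥ (K * (K + l • 1)) *ᵥ A := by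
  rw [dotProduct_comm, (hK.add_smul_one l).dotProduct_mulVec_comm, mulVec_mulVec,
    (commute_add_smul_one K l).eq]

end Matrix

theorem objective_exact_decomposition_general
    (m : ℕ)
    (K : Matrix (Fin m) (Fin m) ℝ) (hK : K.IsSymm)
    (Y : Fin m → ℝ) (l : ℝ)
    (hinv : IsUnit (K + l • (1 : Matrix (Fin m) (Fin m) ℝ)))
    (J : (Fin m → ℝ) → ℝ)
    (hJ : ∀ A : Fin m → ℝ,
      J A = (Y - K.mulVec A) ⬝ᵥ (Y - K.mulVec A) + l * (A ⬝ᵥ K.mulVec A)) :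
    ∀ A : Fin m → ℝ,
      J A = (A - (K + l • (1 : Matrix (Fin m) (Fin m) ℝ))⁻¹.mulVec Y) ⬝ᵥ
              (K * (K + l • (1 : Matrix (Fin m) (Fin m) ℝ))).mulVec
                (A - (K + l • (1 : Matrix (Fin m) (Fin m) ℝ))⁻¹.mulVec Y)
            + J ((K + l • (1 : Matrix (Fin m) (Fin m) ℝ))⁻¹.mulVec Y) := by
  intro A
  set a := (K + l • (1 : Matrix (Fin m) (Fin m) ℝ))⁻¹ *ᵥ Y
  have hY : (K + l • 1) *ᵥ a = Y := by
    rw [mulVec_mulVec, mul_nonsing_inv _ ((isUnit_iff_isUnit_det _).mp hinv), one_mulVec]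
  have hJ_quadratic : ∀ B, J B = Y ⬝ᵥ Y - 2 * (a ⬝ᵥ (K * (K + l • 1)) *ᵥ B) +
      B ⬝ᵥ (K * (K + l • 1)) *ᵥ B := fun B => by
    rw [hJ, hK.sub_mulVec_dotProduct_self_add, ← hY, hK.add_smul_one_mulVec_dotProduct_mulVec, hY]
  rw [hJ_quadratic A, hJ_quadratic a, (hK.mul_add_smul_one l).sub_dotProduct_mulVec_sub]
  ring

/-- For a symmetric real `m × m` matrix `K`, `Y ∈ ℝᵐ` and `λ > 0` with
`K + λ I` invertible, setting `A* = (K + λ I)⁻¹ Y`, the regularized least-squares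
objective satisfies `J(A) = (A − A*)ᵀ K (K + λ I) (A − A*) + J(A*)` for all `A`. -/
theorem objective_exact_decomposition
    (m : ℕ) (hm : 0 < m)
    (K : Matrix (Fin m) (Fin m) ℝ) (hK : K.IsSymm)
    (Y : Fin m → ℝ) (l : ℝ) (hl : 0 < l)
    (hinv : IsUnit (K + l • (1 : Matrix (Fin m) (Fin m) ℝ)))
    (J : (Fin m → ℝ) → ℝ)
    (hJ : ∀ A : Fin m → ℝ,
      J A = (Y - K.mulVec A) ⬝ᵥ (Y - K.mulVec A) + l * (A ⬝ᵥ K.mulVec A)) :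
    ∀ A : Fin m → ℝ,
      J A = (A - (K + l • (1 : Matrix (Fin m) (Fin m) ℝ))⁻¹.mulVec Y) ⬝ᵥ
              (K * (K + l • (1 : Matrix (Fin m) (Fin m) ℝ))).mulVec
                (A - (K + l • (1 : Matrix (Fin m) (Fin m) ℝ))⁻¹.mulVec Y)
            + J ((K + l • (1 : Matrix (Fin m) (Fin m) ℝ))⁻¹.mulVec Y) :=
  objective_exact_decomposition_general m K hK Y l hinv J hJ
end

section
/- Let n and m be positive integers, x₁, …, x_m ∈ ℝⁿ, and σ a nonzero real number. Then the Gaussian kernel matrix K ∈ ℝ^{m×m} with entries K_{ij} = exp(−‖x_i − x_j‖² / σ²) is symmetric and positive semidefinite, i.e. cᵀ K c ≥ 0 for every c ∈ ℝᵐ. -/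
/-!
Writing `‖a - b‖² = ‖a‖² + ‖b‖² - 2⟪a, b⟫`, the kernel matrix `exp(-γ‖xᵢ - xⱼ‖²)`, `γ = σ⁻²`,
is the Hadamard product of the rank-one matrix `exp(-γ‖xᵢ‖²) exp(-γ‖xⱼ‖²)` with the entrywise
exponential of the Gram matrix `2γ⟪xᵢ, xⱼ⟫`. By the Schur product theorem, entrywise powers of a
positive semidefinite matrix are positive semidefinite, hence so is its entrywise exponential, a
limit of their nonnegative combinations; one more Hadamard product gives the claim.
-/

open Matrix

namespace Matrix

variable {ι : Type*} [Fintype ι]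

theorem PosSemidef.map_pow {A : Matrix ι ι ℝ} (hA : A.PosSemidef) (k : ℕ) :
    (A.map (· ^ k)).PosSemidef := by
  induction k with
  | zero =>
    convert posSemidef_vecMulVec_self_star (1 : ι → ℝ) using 1
    ext i j
    simp [vecMulVec]
  | succ k ih =>
    have hsucc : A.map (· ^ (k + 1)) = A.map (· ^ k) ⊙ A := by
      ext i j
      simp [pow_succ]
    rw [hsucc]
    exact ih.hadamard hA

theorem PosSemidef.map_exp {A : Matrix ι ι ℝ} (hA : A.PosSemidef) :
    (A.map Real.exp).PosSemidef := by
  refine .of_dotProduct_mulVec_nonneg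
    (isHermitian_iff_isSymm.2 ((isHermitian_iff_isSymm.1 hA.isHermitian).map _)) fun c ↦ ?_
  have hquad : ∀ M : Matrix ι ι ℝ, star c ⬝ᵥ (M *ᵥ c) = ∑ i, ∑ j, c i * M i j * c j := by
    intro M
    simp only [dotProduct, mulVec, star_trivial, Finset.mul_sum, mul_assoc]
  have hseries : HasSum (fun k : ℕ ↦ star c ⬝ᵥ (A.map (· ^ k) *ᵥ c) / k.factorial)
      (star c ⬝ᵥ (A.map Real.exp *ᵥ c)) := by
    simp only [hquad, Finset.sum_div, map_apply]
    refine hasSum_sum fun i _ ↦ hasSum_sum fun j _ ↦ ?_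
    rw [Real.exp_eq_exp_ℝ]
    have hterm := ((NormedSpace.expSeries_div_hasSum_exp (A i j)).mul_left (c i)).mul_right (c j)
    simpa only [mul_div_assoc', div_mul_eq_mul_div] using hterm
  exact hseries.nonneg fun k ↦ div_nonneg ((hA.map_pow k).dotProduct_mulVec_nonneg c) (by positivity)

theorem posSemidef_gaussianKernel {E : Type*} [NormedAddCommGroup E] [InnerProductSpace ℝ E]
    (x : ι → E) {γ : ℝ} (hγ : 0 ≤ γ) :
    (of fun i j ↦ Real.exp (-γ * ‖x i - x j‖ ^ 2)).PosSemidef := by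
  set d : ι → ℝ := fun i ↦ Real.exp (-γ * ‖x i‖ ^ 2)
  have hfactor : (of fun i j ↦ Real.exp (-γ * ‖x i - x j‖ ^ 2))
      = vecMulVec d (star d) ⊙ ((2 * γ) • gram ℝ x).map Real.exp := by
    ext i j
    simp only [of_apply, hadamard_apply, vecMulVec_apply, star_trivial, map_apply, smul_apply,
      gram_apply, smul_eq_mul, d, ← Real.exp_add, norm_sub_sq_real]
    ring_nf
  rw [hfactor]
  exact (posSemidef_vecMulVec_self_star d).hadamard
    (((posSemidef_gram ℝ x).smul (by positivity)).map_exp)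

end Matrix

theorem gaussian_kernel_matrix_posSemidef_general
    (n m : ℕ)
    (x : Fin m → EuclideanSpace ℝ (Fin n)) (σ : ℝ)
    (K : Matrix (Fin m) (Fin m) ℝ)
    (hKdef : ∀ i j, K i j = Real.exp (-‖x i - x j‖ ^ 2 / σ ^ 2)) :
    K.IsSymm ∧ ∀ c : Fin m → ℝ, 0 ≤ c ⬝ᵥ K.mulVec c := by
  have hK : K = of fun i j ↦ Real.exp (-(σ ^ 2)⁻¹ * ‖x i - x j‖ ^ 2) := by
    ext i j
    rw [hKdef, of_apply]
    ring_nf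
  have hPSD : K.PosSemidef := hK ▸ posSemidef_gaussianKernel x (inv_nonneg.2 (sq_nonneg σ))
  exact ⟨isHermitian_iff_isSymm.1 hPSD.isHermitian, hPSD.dotProduct_mulVec_nonneg⟩

/-- For `x₁, …, x_m ∈ ℝⁿ` and `σ ≠ 0`, the Gaussian kernel matrix
`K_{ij} = exp(−‖x_i − x_j‖² / σ²)` is symmetric and positive semidefinite, i.e.
`cᵀ K c ≥ 0` for every `c ∈ ℝᵐ`. -/
theorem gaussian_kernel_matrix_posSemidef
    (n m : ℕ) (hn : 0 < n) (hm : 0 < m)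
    (x : Fin m → EuclideanSpace ℝ (Fin n)) (σ : ℝ) (hσ : σ ≠ 0)
    (K : Matrix (Fin m) (Fin m) ℝ)
    (hKdef : ∀ i j, K i j = Real.exp (-‖x i - x j‖ ^ 2 / σ ^ 2)) :
    K.IsSymm ∧ ∀ c : Fin m → ℝ, 0 ≤ c ⬝ᵥ K.mulVec c :=
  gaussian_kernel_matrix_posSemidef_general n m x σ K hKdef
end
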